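/- arXiv:1703.09089 — 3 statements merged into one kernel-verified Lean document; each statement's English description precedes it below -/
import Mathlib

section
/- Let m ≥ 1, let y be a partition of [0,1] of size m, let λ > 0, and let f : [0,1] → [0,1] be continuous, strictly monotone on each interval I_j = [y(j−1), y(j)], mapping every partition point y(j) to a partition point, and satisfying |f(s) − f(t)| = λ·|s − t| for all s, t in the same interval I_j. Let N be the incidence matrix of f with respect to y, regarded as a real matrix, and let w ∈ ℝ^m be the vector of interval lengths, w_j = y(j) − y(j−1). Then Nᵀ w = λ w, i.e. for each j, the sum over i of N(i,j)·w_i equals λ·w_j. In particular λ is an eigenvalue of N, with positive eigenvector w of Nᵀ. -/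
open Set Matrix

/-- A partition of `[0,1]` of size `m`: a strictly increasing map
`{0,1,…,m} → ℝ` with first value `0` and last value `1`. -/
structure UnitPartition (m : ℕ) where
  pts : Fin (m + 1) → ℝ
  strictMono : StrictMono pts
  zero : pts 0 = 0
  one : pts (Fin.last m) = 1

/-- The `j`-th interval `I_j = [y(j-1), y(j)]` of a partition, for `j = 1, …, m`. -/
def UnitPartition.interval {m : ℕ} (y : UnitPartition m) (j : Fin m) : Set ℝ :=
  Set.Icc (y.pts j.castSucc) (y.pts j.succ)

/-- `f` is Markov for the partition `y`. -/
def IsMarkov {m : ℕ} (y : UnitPartition m) (f : ℝ → ℝ) : Prop :=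
  ∀ j : Fin m, ∃ a b : Fin (m + 1), a ≤ b ∧
    f '' y.interval j = Set.Icc (y.pts a) (y.pts b)

open Classical in
/-- The incidence matrix of `f` with respect to `y`, with natural-number entries:
`N i j = 1` if `I_i ⊆ f(I_j)` and `0` otherwise. -/
noncomputable def incidence {m : ℕ} (y : UnitPartition m) (f : ℝ → ℝ) :
    Matrix (Fin m) (Fin m) ℕ :=
  Matrix.of fun i j => if y.interval i ⊆ f '' y.interval j then 1 else 0

open Classical in
/-- The incidence matrix of `f` with respect to `y`, regarded as a real matrix. -/
noncomputable def incidenceR {m : ℕ} (y : UnitPartition m) (f : ℝ → ℝ) :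
    Matrix (Fin m) (Fin m) ℝ :=
  Matrix.of fun i j => if y.interval i ⊆ f '' y.interval j then 1 else 0

/-!
On each interval `I_j` the map `f` is a continuous monotone bijection onto the interval spanned by
the images of the endpoints, which are partition points `y(p) ≤ y(q)`, and uniform expansion gives
`y(q) - y(p) = λ w_j`. The `j`-th column of `N` marks exactly the intervals `I_i ⊆ [y(p), y(q)]`,
so `∑ᵢ N(i,j) w_i` telescopes to `y(q) - y(p)`. As `w ≠ 0`, `λ` is an eigenvalue of `Nᵀ`, hence of
`N`, which has the same characteristic polynomial.
-/

namespace Fin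

variable {G : Type*} [AddCommGroup G] {m : ℕ}

theorem sum_filter_succ_le_sub (g : Fin (m + 1) → G) (q : Fin (m + 1)) :
    ∑ i : Fin m with i.succ ≤ q, (g i.succ - g i.castSucc) = g q - g 0 := by
  induction q using Fin.induction with
  | zero => simp [Finset.filter_false_of_mem, Fin.succ_ne_zero]
  | succ k ih =>
    have hsplit : Finset.univ.filter (fun i : Fin m => i.succ ≤ k.succ)
        = insert k (Finset.univ.filter fun i : Fin m => i.succ ≤ k.castSucc) := by
      ext i
      simp only [Finset.mem_filter, Finset.mem_univ, true_and, Finset.mem_insert,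
        succ_le_succ_iff, succ_le_castSucc_iff]
      exact le_iff_eq_or_lt
    rw [hsplit, Finset.sum_insert (by simp), ih]
    abel

theorem sum_filter_le_castSucc_succ_le_sub (g : Fin (m + 1) → G) {p q : Fin (m + 1)}
    (hpq : p ≤ q) :
    ∑ i : Fin m with p ≤ i.castSucc ∧ i.succ ≤ q, (g i.succ - g i.castSucc) = g q - g p := by
  have hbelow : (Finset.univ.filter fun i : Fin m => i.succ ≤ q).filter (fun i => i.succ ≤ p)
      = Finset.univ.filter fun i : Fin m => i.succ ≤ p := by
    rw [Finset.filter_filter]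
    exact Finset.filter_congr fun i _ => ⟨And.right, fun h => ⟨h.trans hpq, h⟩⟩
  have habove : (Finset.univ.filter fun i : Fin m => i.succ ≤ q).filter (fun i => ¬i.succ ≤ p)
      = Finset.univ.filter fun i : Fin m => p ≤ i.castSucc ∧ i.succ ≤ q := by
    rw [Finset.filter_filter]
    exact Finset.filter_congr fun i _ => by rw [not_le, ← le_castSucc_iff, and_comm]
  have hsum := Finset.sum_filter_add_sum_filter_not
    (Finset.univ.filter fun i : Fin m => i.succ ≤ q) (fun i => i.succ ≤ p)
    (fun i => g i.succ - g i.castSucc)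
  rw [hbelow, habove, sum_filter_succ_le_sub, sum_filter_succ_le_sub] at hsum
  rw [← sub_sub_sub_cancel_right (g q) (g p) (g 0), ← hsum, add_sub_cancel_left]

end Fin

namespace UnitPartition

variable {m : ℕ} (y : UnitPartition m)

def lengths : Fin m → ℝ := fun i => y.pts i.succ - y.pts i.castSucc

theorem pts_castSucc_lt_pts_succ (i : Fin m) : y.pts i.castSucc < y.pts i.succ :=
  y.strictMono i.castSucc_lt_succ

theorem lengths_pos (i : Fin m) : 0 < y.lengths i :=
  sub_pos.mpr (y.pts_castSucc_lt_pts_succ i)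

theorem interval_subset_Icc_zero_one (j : Fin m) : y.interval j ⊆ Icc 0 1 := by
  rw [interval, ← y.zero, ← y.one]
  exact Icc_subset_Icc (y.strictMono.monotone (Fin.zero_le _))
    (y.strictMono.monotone (Fin.le_last _))

theorem interval_subset_Icc_pts_iff (i : Fin m) (p q : Fin (m + 1)) :
    y.interval i ⊆ Icc (y.pts p) (y.pts q) ↔ p ≤ i.castSucc ∧ i.succ ≤ q := by
  rw [interval, Icc_subset_Icc_iff (y.pts_castSucc_lt_pts_succ i).le,
    y.strictMono.le_iff_le, y.strictMono.le_iff_le]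

theorem image_interval_eq_Icc_pts {f : ℝ → ℝ} {lam : ℝ} {j : Fin m}
    (hcont : ContinuousOn f (y.interval j))
    (hmono : StrictMonoOn f (y.interval j) ∨ StrictAntiOn f (y.interval j))
    (hpts : ∀ k : Fin (m + 1), ∃ l : Fin (m + 1), f (y.pts k) = y.pts l)
    (hlen : ∀ s ∈ y.interval j, ∀ t ∈ y.interval j, |f s - f t| = lam * |s - t|) :
    ∃ p q : Fin (m + 1), p ≤ q ∧ f '' y.interval j = Icc (y.pts p) (y.pts q) ∧
      y.pts q - y.pts p = lam * y.lengths j := by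
  have hle := (y.pts_castSucc_lt_pts_succ j).le
  obtain ⟨p, hp⟩ := hpts j.castSucc
  obtain ⟨q, hq⟩ := hpts j.succ
  have himage : f '' y.interval j = uIcc (f (y.pts j.castSucc)) (f (y.pts j.succ)) := by
    rw [interval, ← uIcc_of_le hle] at hcont hmono ⊢
    rcases hmono with hmono | hmono
    exacts [hcont.image_uIcc_of_monotoneOn hmono.monotoneOn,
      hcont.image_uIcc_of_antitoneOn hmono.antitoneOn]
  refine ⟨p ⊓ q, p ⊔ q, inf_le_sup, ?_, ?_⟩
  · rw [himage, hp, hq, y.strictMono.monotone.map_min, y.strictMono.monotone.map_max]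
    rfl
  · rw [y.strictMono.monotone.map_min, y.strictMono.monotone.map_max, max_sub_min_eq_abs,
      ← hp, ← hq, hlen _ ⟨hle, le_rfl⟩ _ ⟨le_rfl, hle⟩, abs_of_nonneg (sub_nonneg.mpr hle)]
    rfl

theorem sum_incidenceR_mul_lengths {f : ℝ → ℝ} {lam : ℝ} {j : Fin m}
    (hcont : ContinuousOn f (y.interval j))
    (hmono : StrictMonoOn f (y.interval j) ∨ StrictAntiOn f (y.interval j))
    (hpts : ∀ k : Fin (m + 1), ∃ l : Fin (m + 1), f (y.pts k) = y.pts l)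
    (hlen : ∀ s ∈ y.interval j, ∀ t ∈ y.interval j, |f s - f t| = lam * |s - t|) :
    ∑ i, incidenceR y f i j * y.lengths i = lam * y.lengths j := by
  obtain ⟨p, q, hpq, himage, hdiff⟩ := y.image_interval_eq_Icc_pts hcont hmono hpts hlen
  simp only [incidenceR, of_apply, himage, interval_subset_Icc_pts_iff, ite_mul, one_mul,
    zero_mul]
  rw [← Finset.sum_filter, ← hdiff]
  exact Fin.sum_filter_le_castSucc_succ_le_sub y.pts hpq

end UnitPartition

theorem Matrix.hasEigenvalue_toLin'_of_transpose_mulVec {R n : Type*} [CommRing R] [IsDomain R]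
    [Fintype n] [DecidableEq n] {A : Matrix n n R} {v : n → R} {μ : R} (hv : v ≠ 0)
    (h : Aᵀ *ᵥ v = μ • v) : Module.End.HasEigenvalue (toLin' A) μ := by
  rw [Module.End.hasEigenvalue_iff_isRoot_charpoly, charpoly_toLin', ← charpoly_transpose,
    ← charpoly_toLin', ← Module.End.hasEigenvalue_iff_isRoot_charpoly]
  exact Module.End.hasEigenvalue_of_hasEigenvector
    ⟨Module.End.mem_eigenspace_iff.mpr (by rwa [toLin'_apply]), hv⟩

theorem lengths_eigenvector_of_uniform_expansion_general
    (m : ℕ) (hm : 1 ≤ m) (y : UnitPartition m) (lam : ℝ)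
    (f : ℝ → ℝ)
    (hcont : ContinuousOn f (Set.Icc 0 1))
    (hmono : ∀ j : Fin m, StrictMonoOn f (y.interval j) ∨ StrictAntiOn f (y.interval j))
    (hpts : ∀ j : Fin (m + 1), ∃ k : Fin (m + 1), f (y.pts j) = y.pts k)
    (hlen : ∀ j : Fin m, ∀ s ∈ y.interval j, ∀ t ∈ y.interval j,
      |f s - f t| = lam * |s - t|) :
    (∀ j : Fin m, ∑ i : Fin m, incidenceR y f i j * (y.pts i.succ - y.pts i.castSucc)
        = lam * (y.pts j.succ - y.pts j.castSucc)) ∧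
    (incidenceR y f)ᵀ.mulVec (fun i => y.pts i.succ - y.pts i.castSucc)
        = lam • (fun j : Fin m => y.pts j.succ - y.pts j.castSucc) ∧
    (∀ i : Fin m, 0 < y.pts i.succ - y.pts i.castSucc) ∧
    Module.End.HasEigenvalue (Matrix.toLin' (incidenceR y f)) lam := by
  have hcolumns (j : Fin m) : ∑ i, incidenceR y f i j * y.lengths i = lam * y.lengths j :=
    y.sum_incidenceR_mul_lengths (hcont.mono (y.interval_subset_Icc_zero_one j)) (hmono j) hpts
      (hlen j)
  have hvec : (incidenceR y f)ᵀ *ᵥ y.lengths = lam • y.lengths := by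
    ext j
    simpa only [mulVec, dotProduct, transpose_apply, mul_comm, Pi.smul_apply, smul_eq_mul]
      using hcolumns j
  have hne : y.lengths ≠ 0 := fun h => (y.lengths_pos ⟨0, hm⟩).ne' (congrFun h _)
  exact ⟨hcolumns, hvec, y.lengths_pos, hasEigenvalue_toLin'_of_transpose_mulVec hne hvec⟩

theorem lengths_eigenvector_of_uniform_expansion
    (m : ℕ) (hm : 1 ≤ m) (y : UnitPartition m) (lam : ℝ) (hlam : 0 < lam)
    (f : ℝ → ℝ)
    (hmaps : Set.MapsTo f (Set.Icc 0 1) (Set.Icc 0 1))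
    (hcont : ContinuousOn f (Set.Icc 0 1))
    (hmono : ∀ j : Fin m, StrictMonoOn f (y.interval j) ∨ StrictAntiOn f (y.interval j))
    (hpts : ∀ j : Fin (m + 1), ∃ k : Fin (m + 1), f (y.pts j) = y.pts k)
    (hlen : ∀ j : Fin m, ∀ s ∈ y.interval j, ∀ t ∈ y.interval j,
      |f s - f t| = lam * |s - t|) :
    (∀ j : Fin m, ∑ i : Fin m, incidenceR y f i j * (y.pts i.succ - y.pts i.castSucc)
        = lam * (y.pts j.succ - y.pts j.castSucc)) ∧
    (incidenceR y f)ᵀ.mulVec (fun i => y.pts i.succ - y.pts i.castSucc)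
        = lam • (fun j : Fin m => y.pts j.succ - y.pts j.castSucc) ∧
    (∀ i : Fin m, 0 < y.pts i.succ - y.pts i.castSucc) ∧
    Module.End.HasEigenvalue (Matrix.toLin' (incidenceR y f)) lam :=
  lengths_eigenvector_of_uniform_expansion_general m hm y lam f hcont hmono hpts hlen
end

section
/- Let m ≥ 1, let y be a partition of [0,1] of size m, let f : [0,1] → [0,1] be a continuous map which is Markov for y, and suppose that for every j = 1,…,m there exists p_j ≥ 1 with f^{p_j}(I_j) = [0,1]. Then the incidence matrix N of f with respect to y is aperiodic (primitive): there exists p ≥ 1 such that every entry of N^p is positive. -/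
/-!
If `f^p (I_j) = [0,1]`, then column `j` of `N^p` is positive. Indeed, by the Markov property
`f^p (I_j)` is covered, up to the countably many points coming from intervals that some iterate
collapses to a point, by the intervals `I_k` with `N^p (k, j) > 0`; an interior point of `I_i`
avoiding that countable set then forces `N^p (i, j) > 0`.

A positive diagonal entry of some `N^p` with `p ≥ 1` gives every row of `N` a positive entry, so a
positive column of `N^p` stays positive in `N^q` for all `q ≥ p`; hence `N^(max p_j)` is positive.
-/

open Set Matrix

namespace Matrix

variable {ι R : Type*} [Semiring R] [PartialOrder R] [CanonicallyOrderedAdd R]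

theorem mul_apply_pos [NoZeroDivisors R] {κ ν : Type*} [Fintype κ] {A : Matrix ι κ R}
    {B : Matrix κ ν R} {i : ι} {j : ν} (k : κ) (hA : 0 < A i k) (hB : 0 < B k j) :
    0 < (A * B) i j :=
  (pos_iff_ne_zero.2 (mul_ne_zero hA.ne' hB.ne')).trans_le
    (Finset.single_le_sum_of_canonicallyOrdered (f := fun k ↦ A i k * B k j) (Finset.mem_univ k))

variable [Fintype ι] [DecidableEq ι] {N : Matrix ι ι R}

theorem exists_apply_pos_of_pow_apply_pos {p : ℕ} (hp : 1 ≤ p) {i j : ι}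
    (h : 0 < (N ^ p) i j) : ∃ k, 0 < N i k := by
  obtain ⟨q, rfl⟩ := Nat.exists_eq_add_of_le' hp
  rw [pow_succ', mul_apply] at h
  obtain ⟨k, -, hk⟩ := Finset.exists_ne_zero_of_sum_ne_zero h.ne'
  exact ⟨k, pos_iff_ne_zero.2 (left_ne_zero_of_mul hk)⟩

theorem pow_apply_pos_of_le [NoZeroDivisors R] (hrow : ∀ i, ∃ k, 0 < N i k) {p q : ℕ}
    (hpq : p ≤ q) {j : ι} (h : ∀ i, 0 < (N ^ p) i j) (i : ι) : 0 < (N ^ q) i j := by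
  induction q, hpq using Nat.le_induction generalizing i with
  | base => exact h i
  | succ q _ ih =>
    obtain ⟨k, hk⟩ := hrow i
    rw [pow_succ']
    exact mul_apply_pos k hk (ih k)

theorem exists_pow_pos_of_forall_exists_pow_col_pos [NoZeroDivisors R]
    (h : ∀ j, ∃ p, 1 ≤ p ∧ ∀ i, 0 < (N ^ p) i j) : ∃ p, 1 ≤ p ∧ ∀ i j, 0 < (N ^ p) i j := by
  choose P hP hcol using h
  have hrow : ∀ i, ∃ k, 0 < N i k := fun i ↦ exists_apply_pos_of_pow_apply_pos (hP i) (hcol i i)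
  refine ⟨Finset.univ.sup P ⊔ 1, le_sup_right, fun i j ↦ pow_apply_pos_of_le hrow ?_ (hcol j) i⟩
  exact le_sup_of_le_left (Finset.le_sup (Finset.mem_univ j))

end Matrix

namespace UnitPartition

variable {m : ℕ} (y : UnitPartition m)

theorem exists_mem_interval_subset_Icc {a b : Fin (m + 1)} (hab : a < b) {x : ℝ}
    (hx : x ∈ Icc (y.pts a) (y.pts b)) :
    ∃ k, y.interval k ⊆ Icc (y.pts a) (y.pts b) ∧ x ∈ y.interval k := by
  induction b using Fin.induction with
  | zero => exact absurd hab (Fin.not_lt_zero a)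
  | succ c ih =>
    rcases le_or_gt (y.pts c.castSucc) x with hc | hc
    · exact ⟨c, Icc_subset_Icc_left (y.strictMono.monotone (Fin.le_castSucc_iff.2 hab)),
        hc, hx.2⟩
    · obtain ⟨k, hk, hxk⟩ :=
        ih (y.strictMono.lt_iff_lt.1 (hx.1.trans_lt hc)) ⟨hx.1, hc.le⟩
      exact ⟨k, hk.trans (Icc_subset_Icc_right
        (y.strictMono.monotone Fin.castSucc_lt_succ.le)), hxk⟩

theorem eq_of_mem_interval {i k : Fin m} {x : ℝ} (hx : x ∈ Ioo (y.pts i.castSucc) (y.pts i.succ))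
    (hk : x ∈ y.interval k) : k = i := by
  have h₁ : k.castSucc < i.succ := y.strictMono.lt_iff_lt.1 (hk.1.trans_lt hx.2)
  have h₂ : i.castSucc < k.succ := y.strictMono.lt_iff_lt.1 (hx.1.trans_le hk.2)
  rw [Fin.castSucc_lt_succ_iff] at h₁ h₂
  exact le_antisymm h₁ h₂

end UnitPartition

section Markov

variable {m : ℕ} {y : UnitPartition m} {f : ℝ → ℝ}

theorem incidence_pos_iff {i j : Fin m} :
    0 < incidence y f i j ↔ y.interval i ⊆ f '' y.interval j := by
  classical
  simp only [incidence, of_apply]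
  split_ifs with h <;> simp [h]

theorem IsMarkov.exists_countable_image_iterate_subset (hf : IsMarkov y f) (p : ℕ) (j : Fin m) :
    ∃ s : Set ℝ, s.Countable ∧
      f^[p] '' y.interval j ⊆ s ∪ ⋃ (k) (_ : 0 < (incidence y f ^ p) k j), y.interval k := by
  induction p generalizing j with
  | zero =>
    exact ⟨∅, countable_empty, fun x hx ↦
      Or.inr (mem_iUnion₂_of_mem (i := j) (by simp) (by simpa using hx))⟩
  | succ p ih =>
    choose s hs hsub using ih
    obtain ⟨a, b, hab, himg⟩ := hf j
    rw [Function.iterate_succ, image_comp, himg]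
    rcases hab.eq_or_lt with rfl | hab
    -- `f` collapses `I_j` to a point, whose further orbit `N` does not see.
    · rw [Icc_self, image_singleton]
      exact ⟨_, countable_singleton _, subset_union_left⟩
    refine ⟨⋃ k, s k, countable_iUnion hs, ?_⟩
    rintro _ ⟨u, hu, rfl⟩
    obtain ⟨k, hkj, huk⟩ := y.exists_mem_interval_subset_Icc hab hu
    rcases hsub k (mem_image_of_mem _ huk) with h | h
    · exact Or.inl (mem_iUnion_of_mem k h)
    obtain ⟨l, hlk, hl⟩ := mem_iUnion₂.1 h
    refine Or.inr (mem_biUnion ?_ hl)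
    rw [pow_succ]
    exact mul_apply_pos k hlk (incidence_pos_iff.2 (himg ▸ hkj))

theorem IsMarkov.incidence_pow_apply_pos (hf : IsMarkov y f) {p : ℕ} {j : Fin m}
    (hp : f^[p] '' y.interval j = Icc 0 1) (i : Fin m) : 0 < (incidence y f ^ p) i j := by
  obtain ⟨s, hs, hsub⟩ := hf.exists_countable_image_iterate_subset p j
  obtain ⟨x, hxi, hxs⟩ : (Ioo (y.pts i.castSucc) (y.pts i.succ) ∩ sᶜ).Nonempty :=
    (hs.dense_compl ℝ).inter_open_nonempty _ isOpen_Ioo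
      (nonempty_Ioo.2 (y.strictMono i.castSucc_lt_succ))
  have hx : x ∈ f^[p] '' y.interval j :=
    hp ▸ y.interval_subset_Icc_zero_one i (Ioo_subset_Icc_self hxi)
  rcases hsub hx with h | h
  · exact absurd h hxs
  obtain ⟨k, hk, hxk⟩ := mem_iUnion₂.1 h
  exact y.eq_of_mem_interval hxi hxk ▸ hk

end Markov

theorem incidence_aperiodic_of_eventually_onto_general
    (m : ℕ) (y : UnitPartition m) (f : ℝ → ℝ)
    (hMarkov : IsMarkov y f)
    (honto : ∀ j : Fin m, ∃ p : ℕ, 1 ≤ p ∧ f^[p] '' y.interval j = Set.Icc (0 : ℝ) 1) :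
    ∃ p : ℕ, 1 ≤ p ∧ ∀ i j : Fin m, 0 < (incidence y f ^ p) i j :=
  exists_pow_pos_of_forall_exists_pow_col_pos fun j ↦
    let ⟨p, hp, hj⟩ := honto j
    ⟨p, hp, hMarkov.incidence_pow_apply_pos hj⟩

theorem incidence_aperiodic_of_eventually_onto
    (m : ℕ) (hm : 1 ≤ m) (y : UnitPartition m) (f : ℝ → ℝ)
    (hmaps : Set.MapsTo f (Set.Icc 0 1) (Set.Icc 0 1))
    (hcont : ContinuousOn f (Set.Icc 0 1))
    (hMarkov : IsMarkov y f)
    (honto : ∀ j : Fin m, ∃ p : ℕ, 1 ≤ p ∧ f^[p] '' y.interval j = Set.Icc (0 : ℝ) 1) :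
    ∃ p : ℕ, 1 ≤ p ∧ ∀ i j : Fin m, 0 < (incidence y f ^ p) i j :=
  incidence_aperiodic_of_eventually_onto_general m y f hMarkov honto
end

section
/- Let x be a partition of [0,1] of size n and y a partition of [0,1] of size m refining x, i.e. every point x(k) is some point y(j). Let f : [0,1] → [0,1] be continuous and suppose that for each j = 1,…,m, the image f(I_j) of the refined interval I_j = [y(j−1), y(j)] equals [x(a_j), x(b_j)] for some indices a_j ≤ b_j (the image endpoints lie in the coarse partition). Let N be the incidence matrix of f with respect to y. If two distinct refined intervals I_i and I_{i'} are both contained in a single coarse interval [x(k−1), x(k)], then the i-th and i'-th rows of N are equal; in particular det N = 0, so N is singular. -/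
open Set Matrix

/-!
The image of every refined interval is an interval `[x(a), x(b)]` with endpoints in the coarse
partition. A nondegenerate interval lying in the coarse cell `[x(k-1), x(k)]` is covered by such an
image exactly when the whole cell is, so whether `I_i ⊆ f(I_j)` depends only on the cell containing
`I_i`: two refined intervals in the same cell give equal rows of the incidence matrix.
-/

theorem Icc_subset_Icc_iff_of_subset_cell {α : Type*} [LinearOrder α] {n : ℕ}
    {p : Fin (n + 1) → α} (hp : Monotone p) {k : Fin n} {a b : Fin (n + 1)} {c d : α}
    (hcd : c < d) (hcell : Icc c d ⊆ Icc (p k.castSucc) (p k.succ)) :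
    Icc c d ⊆ Icc (p a) (p b) ↔ Icc (p k.castSucc) (p k.succ) ⊆ Icc (p a) (p b) := by
  refine ⟨fun h => ?_, hcell.trans⟩
  obtain ⟨hac, hdb⟩ := (Icc_subset_Icc_iff hcd.le).mp h
  obtain ⟨hkc, hdk⟩ := (Icc_subset_Icc_iff hcd.le).mp hcell
  apply Icc_subset_Icc
  · by_contra! hlt
    have hka : k.succ ≤ a := Fin.castSucc_lt_iff_succ_le.mp (hp.reflect_lt hlt)
    exact absurd ((hp hka).trans hac) (not_le.mpr (hcd.trans_le hdk))
  · by_contra! hlt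
    have hbk : b ≤ k.castSucc := Fin.le_castSucc_iff.mpr (hp.reflect_lt hlt)
    exact absurd (hdb.trans (hp hbk)) (not_le.mpr (hkc.trans_lt hcd))

theorem UnitPartition.interval_subset_Icc_iff_of_subset {n m : ℕ} {x : UnitPartition n}
    {y : UnitPartition m} {i : Fin m} {k : Fin n} (hi : y.interval i ⊆ x.interval k)
    (a b : Fin (n + 1)) :
    y.interval i ⊆ Icc (x.pts a) (x.pts b) ↔ x.interval k ⊆ Icc (x.pts a) (x.pts b) :=
  Icc_subset_Icc_iff_of_subset_cell x.strictMono.monotone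
    (y.strictMono Fin.castSucc_lt_succ) hi

theorem incidenceR_row_eq {m : ℕ} {y : UnitPartition m} {f : ℝ → ℝ} {i i' : Fin m}
    (h : ∀ j, y.interval i ⊆ f '' y.interval j ↔ y.interval i' ⊆ f '' y.interval j) :
    incidenceR y f i = incidenceR y f i' := by
  classical
  funext j
  exact if_congr (h j) rfl rfl

theorem incidence_singular_of_refinement_general
    (n m : ℕ)
    (x : UnitPartition n) (y : UnitPartition m)
    (f : ℝ → ℝ)
    (himg : ∀ j : Fin m, ∃ a b : Fin (n + 1), a ≤ b ∧
      f '' y.interval j = Set.Icc (x.pts a) (x.pts b))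
    (i i' : Fin m) (hne : i ≠ i') (k : Fin n)
    (hi : y.interval i ⊆ x.interval k) (hi' : y.interval i' ⊆ x.interval k) :
    (∀ j : Fin m, incidenceR y f i j = incidenceR y f i' j) ∧
    (incidenceR y f).det = 0 := by
  have hrow : incidenceR y f i = incidenceR y f i' := by
    refine incidenceR_row_eq fun j => ?_
    obtain ⟨a, b, -, himg_j⟩ := himg j
    rw [himg_j, UnitPartition.interval_subset_Icc_iff_of_subset hi,
      UnitPartition.interval_subset_Icc_iff_of_subset hi']
  exact ⟨congrFun hrow, det_zero_of_row_eq hne hrow⟩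

theorem incidence_singular_of_refinement
    (n m : ℕ) (hn : 1 ≤ n) (hm : 1 ≤ m)
    (x : UnitPartition n) (y : UnitPartition m)
    (hrefine : ∀ k : Fin (n + 1), ∃ j : Fin (m + 1), x.pts k = y.pts j)
    (f : ℝ → ℝ)
    (hmaps : Set.MapsTo f (Set.Icc 0 1) (Set.Icc 0 1))
    (hcont : ContinuousOn f (Set.Icc 0 1))
    (himg : ∀ j : Fin m, ∃ a b : Fin (n + 1), a ≤ b ∧
      f '' y.interval j = Set.Icc (x.pts a) (x.pts b))
    (i i' : Fin m) (hne : i ≠ i') (k : Fin n)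
    (hi : y.interval i ⊆ x.interval k) (hi' : y.interval i' ⊆ x.interval k) :
    (∀ j : Fin m, incidenceR y f i j = incidenceR y f i' j) ∧
    (incidenceR y f).det = 0 :=
  incidence_singular_of_refinement_general n m x y f himg i i' hne k hi hi'
end
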